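/- arXiv:2203.16631 — 2 statements merged into one kernel-verified Lean document; each statement's English description precedes it below -/
import Mathlib

section
/- Let $0 < H < \beta$, $c > 0$, $t_0 = (H/(c(\beta-H)))^{1/\beta}$ and fix $\varepsilon_0 \in (0,t_0)$. Then there exists $\hat{c} \in (0,\min(1,c))$ such that $\max\left\{\sup_{t\in[0,t_0-\varepsilon_0]} \frac{t^H}{1-\hat{c}+ct^{\beta}},\ \sup_{t\ge t_0+\varepsilon_0}\frac{t^H}{1-\hat{c}+(c-\hat{c})t^{\beta}}\right\} < \frac{t_0^H}{1+ct_0^{\beta}}$. -/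
/-! The derivative of `f t = t ^ H / (1 + c * t ^ β)` has the sign of `H - c (β - H) t ^ β`,
so `f` increases strictly up to `t₀` and decreases strictly after it. Away from `t₀` it therefore
stays below `M = max (f (t₀ - ε₀)) (f (t₀ + ε₀)) < f t₀`. Replacing
`1, c` by `1 - ĉ, c - ĉ` with `ĉ = δ min 1 c` shrinks the denominator by at most the factor
`1 - δ`, so both suprema are at most `M / (1 - δ)`, which is below `f t₀` for small `δ > 0`. -/

open Real Set Filter Topology

noncomputable def peakFun (H β c t : ℝ) : ℝ := t ^ H / (1 + c * t ^ β)

section peakFun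

variable {H β c : ℝ}

lemma hasDerivAt_peakFun (hc : 0 ≤ c) {x : ℝ} (hx : 0 < x) :
    HasDerivAt (peakFun H β c)
      (x ^ (H - 1) * (H - c * (β - H) * x ^ β) / (1 + c * x ^ β) ^ 2) x := by
  have hnum : HasDerivAt (fun t : ℝ => t ^ H) (H * x ^ (H - 1)) x :=
    hasDerivAt_rpow_const (Or.inl hx.ne')
  have hden : HasDerivAt (fun t : ℝ => 1 + c * t ^ β) (c * (β * x ^ (β - 1))) x :=
    ((hasDerivAt_rpow_const (Or.inl hx.ne')).const_mul c).const_add 1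
  have hxβ : 0 ≤ x ^ β := rpow_nonneg hx.le β
  refine (hnum.div hden (by positivity)).congr_deriv ?_
  have hpow : x ^ H * x ^ (β - 1) = x ^ (H - 1) * x ^ β := by
    rw [← rpow_add hx, ← rpow_add hx]; ring_nf
  congr 1
  linear_combination (-(c * β)) * hpow

lemma continuousOn_peakFun (hH : 0 ≤ H) (hβ : 0 ≤ β) (hc : 0 ≤ c) :
    ContinuousOn (peakFun H β c) (Ici 0) := by
  intro x hx
  have hxβ : 0 ≤ x ^ β := rpow_nonneg hx β
  exact ((continuousAt_rpow_const x H (Or.inr hH)).div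
    ((continuousAt_rpow_const x β (Or.inr hβ)).const_mul c |>.const_add 1)
    (by positivity)).continuousWithinAt

lemma strictMonoOn_peakFun {t₀ : ℝ} (hH : 0 < H) (hHβ : H < β) (hc : 0 < c)
    (ht₀ : c * (β - H) * t₀ ^ β = H) : StrictMonoOn (peakFun H β c) (Icc 0 t₀) := by
  have hβ : 0 < β := hH.trans hHβ
  refine strictMonoOn_of_deriv_pos (convex_Icc 0 t₀)
    ((continuousOn_peakFun hH.le hβ.le hc.le).mono Icc_subset_Ici_self) fun x hx => ?_
  rw [interior_Icc] at hx
  rw [(hasDerivAt_peakFun hc.le hx.1).deriv]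
  have hlt : c * (β - H) * x ^ β < H :=
    (mul_lt_mul_of_pos_left (rpow_lt_rpow hx.1.le hx.2 hβ) (mul_pos hc (sub_pos.2 hHβ))).trans_eq
      ht₀
  have hx0 := rpow_pos_of_pos hx.1 (H - 1)
  have hxβ : 0 ≤ x ^ β := rpow_nonneg hx.1.le β
  have hsign : 0 < H - c * (β - H) * x ^ β := by linarith
  positivity

lemma strictAntiOn_peakFun {t₀ : ℝ} (hH : 0 < H) (hHβ : H < β) (hc : 0 < c)
    (ht₀ : c * (β - H) * t₀ ^ β = H) (ht₀0 : 0 ≤ t₀) : StrictAntiOn (peakFun H β c) (Ici t₀) := by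
  have hβ : 0 < β := hH.trans hHβ
  refine strictAntiOn_of_deriv_neg (convex_Ici t₀)
    ((continuousOn_peakFun hH.le hβ.le hc.le).mono (Ici_subset_Ici.2 ht₀0)) fun x hx => ?_
  rw [interior_Ici] at hx
  have hx0 : 0 < x := ht₀0.trans_lt hx
  rw [(hasDerivAt_peakFun hc.le hx0).deriv]
  have hlt : H < c * (β - H) * x ^ β := ht₀.symm.trans_lt <|
    mul_lt_mul_of_pos_left (rpow_lt_rpow ht₀0 hx hβ) (mul_pos hc (sub_pos.2 hHβ))
  have hxH := rpow_pos_of_pos hx0 (H - 1)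
  have hxβ : 0 ≤ x ^ β := rpow_nonneg hx0.le β
  exact div_neg_of_neg_of_pos (mul_neg_of_pos_of_neg hxH (by linarith)) (by positivity)

end peakFun

lemma rpow_div_le_peakFun_div {H β c t δ d : ℝ} (hc : 0 ≤ c) (ht : 0 ≤ t) (hδ : δ < 1)
    (hd : (1 - δ) * (1 + c * t ^ β) ≤ d) :
    t ^ H / d ≤ peakFun H β c t / (1 - δ) := by
  have htβ : 0 ≤ t ^ β := rpow_nonneg ht β
  have hδ' : 0 < 1 - δ := sub_pos.2 hδ
  calc t ^ H / d ≤ t ^ H / ((1 - δ) * (1 + c * t ^ β)) :=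
        div_le_div_of_nonneg_left (rpow_nonneg ht H) (by positivity) hd
    _ = peakFun H β c t / (1 - δ) := by rw [peakFun, div_div, mul_comm]

lemma exists_pos_div_one_sub_lt {M A : ℝ} (h : M < A) :
    ∃ δ, 0 < δ ∧ δ < 1 ∧ M / (1 - δ) < A := by
  have hlim : Tendsto (fun δ : ℝ => M / (1 - δ)) (𝓝 0) (𝓝 M) := by
    have hcont : ContinuousAt (fun δ : ℝ => M / (1 - δ)) 0 :=
      continuousAt_const.div (continuousAt_const.sub continuousAt_id) (by norm_num)
    simpa using hcont.tendsto
  obtain ⟨δ, ⟨hδM, hδ1⟩, hδ0⟩ := (((hlim.eventually (gt_mem_nhds h)).and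
    (gt_mem_nhds one_pos)).filter_mono nhdsWithin_le_nhds |>.and self_mem_nhdsWithin).exists
      (f := 𝓝[>] (0 : ℝ))
  exact ⟨δ, hδ0, hδ1, hδM⟩

lemma one_sub_mul_one_add_mul_le {δ c s : ℝ} (hδ : 0 ≤ δ) (hs : 0 ≤ s) :
    (1 - δ) * (1 + c * s) ≤ 1 - δ * min 1 c + (c - δ * min 1 c) * s := by
  have h1 : δ * min 1 c ≤ δ := mul_le_of_le_one_right hδ (min_le_left 1 c)
  have hc : δ * min 1 c ≤ δ * c := mul_le_mul_of_nonneg_left (min_le_right 1 c) hδ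
  nlinarith [mul_le_mul_of_nonneg_right hc hs]

lemma sSup_image_rpow_div_le {H β c δ M : ℝ} {S : Set ℝ} {d : ℝ → ℝ} (hc : 0 ≤ c) (hδ : δ < 1)
    (hS : S.Nonempty) (hS0 : ∀ t ∈ S, 0 ≤ t) (hd : ∀ t ∈ S, (1 - δ) * (1 + c * t ^ β) ≤ d t)
    (hM : ∀ t ∈ S, peakFun H β c t ≤ M) :
    sSup ((fun t => t ^ H / d t) '' S) ≤ M / (1 - δ) :=
  csSup_le (hS.image _) <| forall_mem_image.2 fun t ht =>
    (rpow_div_le_peakFun_div hc (hS0 t ht) hδ (hd t ht)).trans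
      (div_le_div_of_nonneg_right (hM t ht) (sub_nonneg.2 hδ.le))

lemma pos_and_mul_rpow_eq {H β c t₀ : ℝ} (hH : 0 < H) (hHβ : H < β) (hc : 0 < c)
    (ht₀ : t₀ = (H / (c * (β - H))) ^ (1 / β)) :
    0 < t₀ ∧ c * (β - H) * t₀ ^ β = H := by
  have hβH : 0 < β - H := sub_pos.2 hHβ
  refine ⟨ht₀ ▸ rpow_pos_of_pos (by positivity) _, ?_⟩
  rw [ht₀, one_div, rpow_inv_rpow (by positivity) (hH.trans hHβ).ne']
  field_simp

theorem exists_hat_c (H β c ε₀ : ℝ)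
    (hH : 0 < H) (hHβ : H < β) (hc : 0 < c)
    (t₀ : ℝ) (ht₀ : t₀ = (H / (c * (β - H))) ^ (1 / β))
    (hε₀ : 0 < ε₀) (hε₀t₀ : ε₀ < t₀) :
    ∃ chat : ℝ, 0 < chat ∧ chat < min 1 c ∧
      max
        (sSup ((fun t : ℝ => t ^ H / (1 - chat + c * t ^ β)) '' Icc 0 (t₀ - ε₀)))
        (sSup ((fun t : ℝ => t ^ H / (1 - chat + (c - chat) * t ^ β)) '' Ici (t₀ + ε₀)))
        < t₀ ^ H / (1 + c * t₀ ^ β) := by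
  obtain ⟨ht₀pos, ht₀β⟩ := pos_and_mul_rpow_eq hH hHβ hc ht₀
  have hmono := strictMonoOn_peakFun hH hHβ hc ht₀β
  have hanti := strictAntiOn_peakFun hH hHβ hc ht₀β ht₀pos.le
  set M := max (peakFun H β c (t₀ - ε₀)) (peakFun H β c (t₀ + ε₀))
  have hMA : M < peakFun H β c t₀ := max_lt
    (hmono ⟨by linarith, by linarith⟩ ⟨ht₀pos.le, le_rfl⟩ (by linarith))
    (hanti self_mem_Ici (by simp [hε₀.le]) (by linarith))
  obtain ⟨δ, hδ0, hδ1, hδM⟩ := exists_pos_div_one_sub_lt hMA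
  have hmin : 0 < min 1 c := lt_min one_pos hc
  have hden {t : ℝ} (ht : 0 ≤ t) := one_sub_mul_one_add_mul_le (c := c) hδ0.le (rpow_nonneg ht β)
  refine ⟨δ * min 1 c, by positivity, mul_lt_of_lt_one_left hmin hδ1, max_lt ?_ ?_⟩
  · refine (sSup_image_rpow_div_le hc.le hδ1 (nonempty_Icc.2 (by linarith)) (fun t ht => ht.1)
      (fun t ht => (hden ht.1).trans ?_) fun t ht => ?_).trans_lt hδM
    · nlinarith [mul_nonneg (mul_nonneg hδ0.le hmin.le) (rpow_nonneg ht.1 β)]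
    · exact (hmono.monotoneOn ⟨ht.1, by linarith [ht.2]⟩ ⟨by linarith, by linarith⟩ ht.2).trans
        (le_max_left _ _)
  · have hS0 (t : ℝ) (ht : t ∈ Ici (t₀ + ε₀)) : 0 ≤ t := by linarith [mem_Ici.1 ht]
    refine (sSup_image_rpow_div_le hc.le hδ1 nonempty_Ici hS0 (fun t ht => hden (hS0 t ht))
      fun t ht => ?_).trans_lt hδM
    exact (hanti.antitoneOn (by simp [hε₀.le]) (mem_Ici.2 <| by linarith [mem_Ici.1 ht]) ht).trans
      (le_max_right _ _)
end

section
/- Let $F$ be a distribution function satisfying $1 - F(x) = \rho(x)e^{-Cx^{\tau}}$ for $x \ge x_0$, where $C, \tau > 0$ and $\rho$ is regularly varying at infinity with index $\gamma \in \mathbb{R}$. Define $\mu_n = (C^{-1}\log n)^{1/\tau} + \tau^{-1}(C^{-1}\log n)^{1/\tau - 1}C^{-1}\log\big(\rho((C^{-1}\log n)^{1/\tau})\big)$ and $\nu_n = (C\tau)^{-1}(C^{-1}\log n)^{1/\tau-1}$. Then for every $x \in \mathbb{R}$, $\lim_{n\to\infty} n\big(1 - F(\mu_n + \nu_n x)\big)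 = e^{-x}$. -/
/-!
Put `G y = log (1 - F y) + C y ^ τ`, which is measurable because `F` is monotone and equals
`log (ρ y)` for `y ≥ x₀`, and `k t = G (exp t) - γ t`. Regular variation says that
`k (t + v) - k t → 0` for every `v`. By the uniform convergence theorem (Egorov's theorem and a
measure-counting argument) this is uniform for `v ∈ [0, 1]`, so `G (λ y) - G y → 0` as `y → ∞`,
`λ → 1`, and `G = O(log)`.

With `b = (log n / C) ^ (1 / τ)` the level is `μ n + ν n x = b (1 + δ)`, where
`δ = (G b + x) / (C τ b ^ τ) = O(log b / b ^ τ)`, and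
`log (n (1 - F (b (1 + δ)))) = (G (b (1 + δ)) - G b) - x - C b ^ τ ((1 + δ) ^ τ - 1 - τ δ)`.
The first term tends to `0` by uniformity, and the last is `O(b ^ τ δ ^ 2) = O(log² b / b ^ τ)`.
-/

open Real Filter Topology MeasureTheory Asymptotics Set

lemma exists_volume_gt_eventually_abs_add_sub_lt {k : ℝ → ℝ} (hk : Measurable k)
    (hkv : ∀ v, Tendsto (fun t => k (t + v) - k t) atTop (𝓝 0))
    {a : ℕ → ℝ} (ha : Tendsto a atTop atTop) {ε : ℝ} (hε : 0 < ε) :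
    ∃ S ⊆ Icc (0 : ℝ) 2, MeasurableSet S ∧ ENNReal.ofReal (3 / 2) < volume S ∧
      ∀ᶠ n in atTop, ∀ v ∈ S, |k (a n + v) - k (a n)| < ε := by
  obtain ⟨t, -, ht, htvol, hunif⟩ := tendstoUniformlyOn_of_ae_tendsto (μ := volume)
    (f := fun n v => k (a n + v) - k (a n)) (g := 0)
    (fun n => (by fun_prop : Measurable fun v => k (a n + v) - k (a n)).stronglyMeasurable)
    stronglyMeasurable_const measurableSet_Icc (by simp)
    (ae_of_all _ fun v _ => (hkv v).comp ha) (ε := 1 / 4) (by norm_num)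
  refine ⟨Icc 0 2 \ t, sdiff_subset, measurableSet_Icc.diff ht, ?_, ?_⟩
  · calc ENNReal.ofReal (3 / 2) < ENNReal.ofReal 2 - ENNReal.ofReal (1 / 4) := by
          rw [← ENNReal.ofReal_sub _ (by norm_num)]
          exact (ENNReal.ofReal_lt_ofReal_iff (by norm_num)).2 (by norm_num)
      _ ≤ volume (Icc (0 : ℝ) 2) - volume t := by
          rw [volume_Icc, sub_zero]; gcongr
      _ ≤ volume (Icc 0 2 \ t) := le_measure_sdiff
  · filter_upwards [Metric.tendstoUniformlyOn_iff.1 hunif ε hε] with n hn v hv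
    simpa [Real.dist_eq, abs_sub_comm] using hn v hv

lemma tendsto_add_sub_of_mem_Icc {k : ℝ → ℝ} (hk : Measurable k)
    (hkv : ∀ v, Tendsto (fun t => k (t + v) - k t) atTop (𝓝 0))
    {a u : ℕ → ℝ} (ha : Tendsto a atTop atTop) (hu : ∀ n, u n ∈ Icc (0 : ℝ) 1) :
    Tendsto (fun n => k (a n + u n) - k (a n)) atTop (𝓝 0) := by
  rw [Metric.tendsto_atTop]
  intro ε hε
  have hau : Tendsto (fun n => a n + u n) atTop atTop :=
    tendsto_atTop_mono (fun n => le_add_of_nonneg_right (hu n).1) ha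
  obtain ⟨S, hS, -, hSvol, hSk⟩ :=
    exists_volume_gt_eventually_abs_add_sub_lt hk hkv ha (half_pos hε)
  obtain ⟨S', hS', hS'm, hS'vol, hS'k⟩ :=
    exists_volume_gt_eventually_abs_add_sub_lt hk hkv hau (half_pos hε)
  obtain ⟨N, hN⟩ := eventually_atTop.1 (hSk.and hS'k)
  refine ⟨N, fun n hn => ?_⟩
  -- `S` and the translate `u n + S'` lie in `[0, 3]` and have total measure `> 3`.
  obtain ⟨v, hvS, hvS'⟩ : (S ∩ (· - u n) ⁻¹' S').Nonempty := by
    refine nonempty_inter_of_measure_lt_add volume (hS'm.preimage (measurable_sub_const _))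
      (u := Icc 0 3) (hS.trans (Icc_subset_Icc_right (by norm_num))) ?_ ?_
    · intro w hw
      have := hS' hw
      constructor <;> linarith [this.1, this.2, (hu n).1, (hu n).2]
    · simp only [sub_eq_add_neg]
      rw [measure_preimage_add_right, volume_Icc, sub_zero,
        show (3 : ℝ) = 3 / 2 + 3 / 2 by norm_num, ENNReal.ofReal_add (by norm_num) (by norm_num)]
      exact ENNReal.add_lt_add hSvol hS'vol
  have h₁ := (hN n hn).1 v hvS
  have h₂ := (hN n hn).2 (v - u n) hvS'
  rw [add_add_sub_cancel] at h₂
  rw [Real.dist_eq, sub_zero]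
  calc |k (a n + u n) - k (a n)|
      ≤ |k (a n + u n) - k (a n + v)| + |k (a n + v) - k (a n)| := abs_sub_le _ _ _
    _ < ε := by rw [abs_sub_comm] at h₂; linarith

lemma eventually_forall_mem_Icc_abs_add_sub_lt {k : ℝ → ℝ} (hk : Measurable k)
    (hkv : ∀ v, Tendsto (fun t => k (t + v) - k t) atTop (𝓝 0)) {ε : ℝ} (hε : 0 < ε) :
    ∀ᶠ t in atTop, ∀ s ∈ Icc (0 : ℝ) 1, |k (t + s) - k t| < ε := by
  by_contra h
  obtain ⟨t, ht, hbad⟩ := exists_seq_forall_of_frequently (not_eventually.1 h)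
  simp only [not_forall, not_lt] at hbad
  choose s hs hbad using hbad
  obtain ⟨N, hN⟩ := Metric.tendsto_atTop.1 (tendsto_add_sub_of_mem_Icc hk hkv ht hs) ε hε
  have := hN N le_rfl
  rw [Real.dist_eq, sub_zero] at this
  exact (hbad N).not_gt this

lemma tendsto_add_sub_atTop_prod_nhds_zero {k : ℝ → ℝ} (hk : Measurable k)
    (hkv : ∀ v, Tendsto (fun t => k (t + v) - k t) atTop (𝓝 0)) :
    Tendsto (fun p : ℝ × ℝ => k (p.1 + p.2) - k p.1) (atTop ×ˢ 𝓝 0) (𝓝 0) := by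
  rw [Metric.tendsto_nhds]
  intro ε hε
  obtain ⟨T, hT⟩ := eventually_atTop.1 (eventually_forall_mem_Icc_abs_add_sub_lt hk hkv hε)
  have hsmall : ∀ᶠ w : ℝ in 𝓝 0, |w| ≤ 1 := by
    filter_upwards [Metric.closedBall_mem_nhds (0 : ℝ) one_pos] with w hw
    simpa using hw
  filter_upwards [(eventually_ge_atTop (T + 1)).prod_mk hsmall] with ⟨t, w⟩ ⟨ht, hw⟩
  obtain ⟨hw₁, hw₂⟩ := abs_le.1 hw
  rw [Real.dist_eq, sub_zero]
  rcases le_total 0 w with hw₀ | hw₀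
  · exact hT t (by linarith) w ⟨hw₀, hw₂⟩
  · have := hT (t + w) (by linarith) (-w) ⟨by linarith, by linarith⟩
    rwa [add_neg_cancel_right, abs_sub_comm] at this

lemma abs_sub_le_of_forall_mem_Icc {f : ℝ → ℝ} {T c : ℝ}
    (h : ∀ t ≥ T, ∀ s ∈ Icc (0 : ℝ) 1, |f (t + s) - f t| ≤ c) {t : ℝ} (ht : T ≤ t) :
    |f t - f T| ≤ c * (t - T + 1) := by
  have hsteps : ∀ n : ℕ, ∀ s ∈ Icc (0 : ℝ) 1, |f (T + n + s) - f T| ≤ c * (n + 1) := by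
    intro n
    induction n with
    | zero => simpa using h T le_rfl
    | succ n ih =>
      intro s hs
      have hstep := h (T + n + s) (by linarith [hs.1, n.cast_nonneg (α := ℝ)]) 1
        ⟨zero_le_one, le_rfl⟩
      calc |f (T + ↑(n + 1) + s) - f T|
          ≤ |f (T + n + s + 1) - f (T + n + s)| + |f (T + n + s) - f T| := by
            push_cast
            rw [show T + (n + 1) + s = T + n + s + 1 by ring]
            exact abs_sub_le _ _ _
        _ ≤ c * (↑(n + 1) + 1) := by push_cast; linarith [ih s hs]
  have hc : 0 ≤ c := (abs_nonneg _).trans (h T le_rfl 0 ⟨le_rfl, zero_le_one⟩)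
  set n := ⌊t - T⌋₊
  have hn : (n : ℝ) ≤ t - T := Nat.floor_le (by linarith)
  have := hsteps n (t - T - n) ⟨by linarith, by linarith [Nat.lt_floor_add_one (t - T)]⟩
  rw [show T + n + (t - T - n) = t by ring] at this
  exact this.trans (by gcongr)

lemma isBigO_id_of_tendsto_add_sub {k : ℝ → ℝ} (hk : Measurable k)
    (hkv : ∀ v, Tendsto (fun t => k (t + v) - k t) atTop (𝓝 0)) :
    k =O[atTop] id := by
  obtain ⟨T, hT⟩ := eventually_atTop.1 (eventually_forall_mem_Icc_abs_add_sub_lt hk hkv one_pos)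
  refine IsBigO.of_bound 2 ?_
  filter_upwards [eventually_ge_atTop T, eventually_ge_atTop (|k T| - T + 1)] with t h₁ h₂
  have hinc := abs_sub_le_of_forall_mem_Icc (fun t ht s hs => (hT t ht s hs).le) h₁
  have ht : 0 ≤ t := by linarith [abs_nonneg (k T)]
  rw [Real.norm_eq_abs, Real.norm_eq_abs, id, abs_of_nonneg ht]
  linarith [abs_sub_abs_le_abs_sub (k t) (k T)]

lemma log_one_add_sub_self_isBigO : (fun t : ℝ => log (1 + t) - t) =O[𝓝 0] (· ^ 2) := by
  refine IsBigO.of_bound 2 ?_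
  filter_upwards [Metric.closedBall_mem_nhds (0 : ℝ) (by norm_num : (0 : ℝ) < 1 / 2)] with t ht
  rw [Metric.mem_closedBall, Real.dist_eq, sub_zero] at ht
  have h := abs_log_sub_add_sum_range_le (x := -t) (by rw [abs_neg]; linarith) 1
  norm_num [abs_neg, sub_neg_eq_add] at h
  simp only [Real.norm_eq_abs, abs_pow, sq_abs]
  calc |log (1 + t) - t| = |-t + log (1 + t)| := by rw [neg_add_eq_sub]
    _ ≤ t ^ 2 / (1 - |t|) := h
    _ ≤ 2 * t ^ 2 := by
      rw [div_le_iff₀ (by linarith)]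
      nlinarith [sq_nonneg t]

lemma one_add_rpow_sub_isBigO (τ : ℝ) :
    (fun t : ℝ => (1 + t) ^ τ - 1 - τ * t) =O[𝓝 0] (· ^ 2) := by
  have hlog : (fun t : ℝ => log (1 + t)) =O[𝓝 0] id :=
    ((log_one_add_sub_self_isBigO.trans (isLittleO_pow_id one_lt_two).isBigO).add
      (isBigO_refl id _)).congr_left fun t => sub_add_cancel _ _
  have hz : Tendsto (fun t : ℝ => τ * log (1 + t)) (𝓝 0) (𝓝 0) := by
    have : ContinuousAt (fun t : ℝ => τ * log (1 + t)) 0 :=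
      continuousAt_const.mul ((continuousAt_const.add continuousAt_id).log (by norm_num))
    simpa using this.tendsto
  have hexp := ((exp_sub_sum_range_isBigO_pow 2).comp_tendsto hz).trans
    ((hlog.const_mul_left τ).pow 2)
  refine (hexp.add (log_one_add_sub_self_isBigO.const_mul_left τ)).congr' ?_ EventuallyEq.rfl
  filter_upwards [Metric.ball_mem_nhds (0 : ℝ) one_pos] with t ht
  rw [Metric.mem_ball, Real.dist_eq, sub_zero] at ht
  have h1t : 0 < 1 + t := by linarith [neg_abs_le t]
  simp only [Function.comp_apply, Finset.sum_range_succ, Finset.sum_range_zero, Nat.factorial_zero,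
    Nat.factorial_one, Nat.cast_one, rpow_def_of_pos h1t]
  ring

lemma tendsto_comp_exp_add_sub_mul_sub {G : ℝ → ℝ} {γ : ℝ}
    (hGv : ∀ v, Tendsto (fun t => G (exp (t + v)) - G (exp t)) atTop (𝓝 (γ * v))) (v : ℝ) :
    Tendsto (fun t => (G (exp (t + v)) - γ * (t + v)) - (G (exp t) - γ * t)) atTop (𝓝 0) := by
  simpa [sub_self] using ((hGv v).sub_const (γ * v)).congr fun t => by ring

lemma isBigO_log_of_tendsto_comp_exp_add_sub {G : ℝ → ℝ} {γ : ℝ} (hG : Measurable G)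
    (hGv : ∀ v, Tendsto (fun t => G (exp (t + v)) - G (exp t)) atTop (𝓝 (γ * v))) :
    G =O[atTop] log := by
  have hk := isBigO_id_of_tendsto_add_sub (k := fun t => G (exp t) - γ * t) (by fun_prop)
    (tendsto_comp_exp_add_sub_mul_sub hGv)
  refine ((hk.comp_tendsto tendsto_log_atTop).add
    ((isBigO_refl log atTop).const_mul_left γ)).congr' ?_ EventuallyEq.rfl
  filter_upwards [eventually_gt_atTop 0] with y hy
  simp [exp_log hy]

lemma tendsto_mul_sub_atTop_prod_nhds_one {G : ℝ → ℝ} {γ : ℝ} (hG : Measurable G)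
    (hGv : ∀ v, Tendsto (fun t => G (exp (t + v)) - G (exp t)) atTop (𝓝 (γ * v))) :
    Tendsto (fun p : ℝ × ℝ => G (p.1 * p.2) - G p.1) (atTop ×ˢ 𝓝 1) (𝓝 0) := by
  have hk := tendsto_add_sub_atTop_prod_nhds_zero (k := fun t => G (exp t) - γ * t)
    (by fun_prop) (tendsto_comp_exp_add_sub_mul_sub hGv)
  have hlog1 : Tendsto log (𝓝 1) (𝓝 0) := by
    simpa using (continuousAt_log one_ne_zero).tendsto
  have hlog : Tendsto (fun p : ℝ × ℝ => (log p.1, log p.2)) (atTop ×ˢ 𝓝 1) (atTop ×ˢ 𝓝 0) :=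
    (tendsto_log_atTop.comp tendsto_fst).prodMk (hlog1.comp tendsto_snd)
  have := (hk.comp hlog).add ((hlog1.comp tendsto_snd).const_mul γ)
  rw [mul_zero, add_zero] at this
  refine this.congr' ?_
  filter_upwards [(eventually_gt_atTop 0).prod_mk (eventually_gt_nhds one_pos)] with ⟨y, l⟩ ⟨hy, hl⟩
  simp only [Function.comp_apply, exp_add, exp_log hy, exp_log hl]
  ring

noncomputable def levelCorrection (C τ : ℝ) (G : ℝ → ℝ) (x y : ℝ) : ℝ :=
  (G y + x) / (C * τ * y ^ τ)

section Level

variable {G : ℝ → ℝ} {γ C τ : ℝ}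

lemma add_const_isBigO_log (hG : Measurable G)
    (hGv : ∀ v, Tendsto (fun t => G (exp (t + v)) - G (exp t)) atTop (𝓝 (γ * v))) (x : ℝ) :
    (fun y => G y + x) =O[atTop] log :=
  (isBigO_log_of_tendsto_comp_exp_add_sub hG hGv).add isLittleO_const_log_atTop.isBigO

lemma tendsto_levelCorrection (hG : Measurable G)
    (hGv : ∀ v, Tendsto (fun t => G (exp (t + v)) - G (exp t)) atTop (𝓝 (γ * v)))
    (hτ : 0 < τ) (x : ℝ) : Tendsto (levelCorrection C τ G x) atTop (𝓝 0) := by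
  have := ((add_const_isBigO_log hG hGv x).trans_isLittleO
    (isLittleO_log_rpow_atTop hτ)).tendsto_div_nhds_zero.const_mul (C * τ)⁻¹
  rw [mul_zero] at this
  refine this.congr fun y => ?_
  rw [levelCorrection]
  ring

lemma tendsto_rpow_mul_levelCorrection_sq (hG : Measurable G)
    (hGv : ∀ v, Tendsto (fun t => G (exp (t + v)) - G (exp t)) atTop (𝓝 (γ * v)))
    (hτ : 0 < τ) (x : ℝ) :
    Tendsto (fun y => y ^ τ * levelCorrection C τ G x y ^ 2) atTop (𝓝 0) := by
  have hlog2 := isLittleO_log_rpow_rpow_atTop 2 hτ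
  simp only [rpow_two] at hlog2
  have := (((add_const_isBigO_log hG hGv x).pow 2).trans_isLittleO
    hlog2).tendsto_div_nhds_zero.const_mul ((C * τ) ^ 2)⁻¹
  rw [mul_zero] at this
  refine this.congr' ?_
  filter_upwards [eventually_gt_atTop 0] with y hy
  have : y ^ τ ≠ 0 := (rpow_pos_of_pos hy τ).ne'
  rw [levelCorrection]
  field_simp

lemma tendsto_mul_one_add_levelCorrection_atTop (hG : Measurable G)
    (hGv : ∀ v, Tendsto (fun t => G (exp (t + v)) - G (exp t)) atTop (𝓝 (γ * v)))
    (hτ : 0 < τ) (x : ℝ) :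
    Tendsto (fun y => y * (1 + levelCorrection C τ G x y)) atTop atTop := by
  refine tendsto_id.atTop_mul_pos one_pos ?_
  simpa using (tendsto_levelCorrection hG hGv hτ x).const_add 1

lemma tendsto_level_exponent (hG : Measurable G)
    (hGv : ∀ v, Tendsto (fun t => G (exp (t + v)) - G (exp t)) atTop (𝓝 (γ * v)))
    (hC : 0 < C) (hτ : 0 < τ) (x : ℝ) :
    Tendsto (fun y => C * y ^ τ + G (y * (1 + levelCorrection C τ G x y)) -
      C * (y * (1 + levelCorrection C τ G x y)) ^ τ) atTop (𝓝 (-x)) := by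
  have hδ := tendsto_levelCorrection (C := C) hG hGv hτ x
  have hslow := (tendsto_mul_sub_atTop_prod_nhds_one hG hGv).comp
    (tendsto_id.prodMk (by simpa using hδ.const_add 1))
  have hrem : Tendsto (fun y => y ^ τ * ((1 + levelCorrection C τ G x y) ^ τ - 1 -
      τ * levelCorrection C τ G x y)) atTop (𝓝 0) :=
    ((isBigO_refl (fun y => y ^ τ) atTop).mul
      ((one_add_rpow_sub_isBigO τ).comp_tendsto hδ)).trans_tendsto
        (tendsto_rpow_mul_levelCorrection_sq hG hGv hτ x)
  have := (hslow.sub_const x).sub (hrem.const_mul C)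
  rw [zero_sub, mul_zero, sub_zero] at this
  refine this.congr' ?_
  filter_upwards [eventually_gt_atTop 0, hδ.eventually (eventually_gt_nhds (neg_one_lt_zero))]
    with y hy hδy
  have hyτ : y ^ τ ≠ 0 := (rpow_pos_of_pos hy τ).ne'
  have hkey : C * y ^ τ * (τ * levelCorrection C τ G x y) = G y + x := by
    rw [levelCorrection]; field_simp
  have hδy' : 0 ≤ 1 + levelCorrection C τ G x y := by linarith
  simp only [Function.comp_apply, id, mul_rpow hy.le hδy']
  linear_combination hkey

end Level

lemma tendsto_comp_exp_add_sub_of_eq_log {G ρ : ℝ → ℝ} {x₀ γ : ℝ}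
    (hGρ : ∀ y, x₀ ≤ y → G y = log (ρ y)) (hρpos : ∀ x, 0 < x → 0 < ρ x)
    (hρrv : ∀ l : ℝ, 0 < l → Tendsto (fun x => ρ (l * x) / ρ x) atTop (𝓝 (l ^ γ))) (v : ℝ) :
    Tendsto (fun t => G (exp (t + v)) - G (exp t)) atTop (𝓝 (γ * v)) := by
  have := ((hρrv _ (exp_pos v)).comp tendsto_exp_atTop).log (rpow_pos_of_pos (exp_pos v) γ).ne'
  rw [log_rpow (exp_pos v), log_exp] at this
  refine this.congr' ?_
  have hv : ∀ᶠ t in atTop, x₀ ≤ exp (t + v) :=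
    (tendsto_exp_atTop.comp (tendsto_atTop_add_const_right _ v tendsto_id)).eventually_ge_atTop x₀
  filter_upwards [hv, tendsto_exp_atTop.eventually_ge_atTop x₀] with t h₁ h₂
  rw [Function.comp_apply, hGρ _ h₁, hGρ _ h₂, ← exp_add, add_comm,
    log_div (hρpos _ (exp_pos _)).ne' (hρpos _ (exp_pos _)).ne']

lemma add_mul_rpow_sub_one_eq_mul_one_add_levelCorrection {G : ℝ → ℝ} {C τ s : ℝ} (hC : C ≠ 0)
    (hτ : τ ≠ 0) (hs : 0 < s) (x : ℝ) :
    s ^ (1 / τ) + τ⁻¹ * s ^ (1 / τ - 1) * (C⁻¹ * G (s ^ (1 / τ))) +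
        (C * τ)⁻¹ * s ^ (1 / τ - 1) * x =
      s ^ (1 / τ) * (1 + levelCorrection C τ G x (s ^ (1 / τ))) := by
  rw [levelCorrection, rpow_sub_one hs.ne', ← rpow_mul hs.le, one_div_mul_cancel hτ, rpow_one]
  field_simp
  ring

theorem weibull_like_level_limit_general (F : ℝ → ℝ) (ρ : ℝ → ℝ) (x₀ C τ γ : ℝ)
    (hx₀ : 0 < x₀) (hC : 0 < C) (hτ : 0 < τ)
    (hFmono : Monotone F)
    (hρpos : ∀ x, 0 < x → 0 < ρ x)
    (hρrv : ∀ l : ℝ, 0 < l → Tendsto (fun x => ρ (l * x) / ρ x) atTop (𝓝 (l ^ γ)))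
    (htail : ∀ x : ℝ, x₀ ≤ x → 1 - F x = ρ x * Real.exp (-C * x ^ τ))
    (μ ν : ℕ → ℝ)
    (hμ : ∀ n : ℕ, 2 ≤ n → μ n =
      (C⁻¹ * Real.log n) ^ (1 / τ) +
        τ⁻¹ * (C⁻¹ * Real.log n) ^ (1 / τ - 1) *
          (C⁻¹ * Real.log (ρ ((C⁻¹ * Real.log n) ^ (1 / τ)))))
    (hν : ∀ n : ℕ, 2 ≤ n → ν n = (C * τ)⁻¹ * (C⁻¹ * Real.log n) ^ (1 / τ - 1)) :
    ∀ x : ℝ, Tendsto (fun n : ℕ => (n : ℝ) * (1 - F (μ n + ν n * x))) atTop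
      (𝓝 (Real.exp (-x))) := by
  intro x
  set G : ℝ → ℝ := fun y => log (1 - F y) + C * y ^ τ
  have hGρ : ∀ y, x₀ ≤ y → G y = log (ρ y) := fun y hy => by
    simp only [G, htail y hy, log_mul (hρpos y (hx₀.trans_le hy)).ne' (exp_pos _).ne', log_exp]
    ring
  have hG : Measurable G := by
    have := hFmono.measurable
    fun_prop
  have hGv := tendsto_comp_exp_add_sub_of_eq_log hGρ hρpos hρrv
  set b : ℕ → ℝ := fun n => (C⁻¹ * log n) ^ (1 / τ)
  have hb : Tendsto b atTop atTop := (tendsto_rpow_atTop (by positivity)).comp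
    ((tendsto_log_atTop.comp tendsto_natCast_atTop_atTop).const_mul_atTop (inv_pos.2 hC))
  set ℓ : ℕ → ℝ := fun n => b n * (1 + levelCorrection C τ G x (b n))
  have hℓ : Tendsto ℓ atTop atTop :=
    (tendsto_mul_one_add_levelCorrection_atTop hG hGv hτ x).comp hb
  have hμν : ∀ᶠ n in atTop, μ n + ν n * x = ℓ n := by
    filter_upwards [eventually_ge_atTop 2, hb.eventually_ge_atTop x₀] with n hn hbn
    have hlog : 0 < C⁻¹ * log n := mul_pos (inv_pos.2 hC) (log_pos (by exact_mod_cast hn))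
    rw [hμ n hn, hν n hn, ← hGρ _ hbn]
    exact add_mul_rpow_sub_one_eq_mul_one_add_levelCorrection hC.ne' hτ.ne' hlog x
  have hexp : ∀ᶠ n : ℕ in atTop,
      (n : ℝ) * (1 - F (ℓ n)) = exp (C * b n ^ τ + G (ℓ n) - C * ℓ n ^ τ) := by
    filter_upwards [eventually_ge_atTop 1, hℓ.eventually_ge_atTop x₀] with n hn hℓn
    have hF : 0 < 1 - F (ℓ n) := by
      rw [htail _ hℓn]; exact mul_pos (hρpos _ (hx₀.trans_le hℓn)) (exp_pos _)
    have hbτ : C * b n ^ τ = log n := by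
      simp only [b, one_div, rpow_inv_rpow (by positivity : 0 ≤ C⁻¹ * log n) hτ.ne',
        mul_inv_cancel_left₀ hC.ne']
    simp only [G, hbτ, add_sub_assoc, sub_self, exp_zero, mul_one, exp_add, exp_log hF,
      exp_log (show (0 : ℝ) < n by exact_mod_cast hn)]
  refine ((continuous_exp.tendsto _).comp
    ((tendsto_level_exponent hG hGv hC hτ x).comp hb)).congr' ?_
  filter_upwards [hμν, hexp] with n h₁ h₂
  rw [h₁, h₂]
  rfl

theorem weibull_like_level_limit (F : ℝ → ℝ) (ρ : ℝ → ℝ) (x₀ C τ γ : ℝ)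
    (hx₀ : 0 < x₀) (hC : 0 < C) (hτ : 0 < τ)
    (hFmono : Monotone F) (hF01 : ∀ x, F x ∈ Set.Icc (0 : ℝ) 1)
    (hFtop : Tendsto F atTop (𝓝 1)) (hFbot : Tendsto F atBot (𝓝 0))
    (hρpos : ∀ x, 0 < x → 0 < ρ x)
    (hρrv : ∀ l : ℝ, 0 < l → Tendsto (fun x => ρ (l * x) / ρ x) atTop (𝓝 (l ^ γ)))
    (htail : ∀ x : ℝ, x₀ ≤ x → 1 - F x = ρ x * Real.exp (-C * x ^ τ))
    (μ ν : ℕ → ℝ)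
    (hμ : ∀ n : ℕ, 2 ≤ n → μ n =
      (C⁻¹ * Real.log n) ^ (1 / τ) +
        τ⁻¹ * (C⁻¹ * Real.log n) ^ (1 / τ - 1) *
          (C⁻¹ * Real.log (ρ ((C⁻¹ * Real.log n) ^ (1 / τ)))))
    (hν : ∀ n : ℕ, 2 ≤ n → ν n = (C * τ)⁻¹ * (C⁻¹ * Real.log n) ^ (1 / τ - 1)) :
    ∀ x : ℝ, Tendsto (fun n : ℕ => (n : ℝ) * (1 - F (μ n + ν n * x))) atTop
      (𝓝 (Real.exp (-x))) :=
  weibull_like_level_limit_general F ρ x₀ C τ γ hx₀ hC hτ hFmono hρpos hρrv htail μ ν hμ hν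
end
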